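/- Let $M_1, M_2$ be $q$-matroids on ground spaces $E_1, E_2$ and fix an involutive anti-isomorphism $\perp$ of $\mathcal{L}(E_1 \oplus E_2)$ with $E_1^\perp = E_2$. Then the dual of the direct sum equals the direct sum of the duals: $(M_1 \oplus M_2)^* = M_1^* \oplus M_2^*$, where duality on $E_i$ is via $A^{\perp(E_i)} = A^\perp \cap E_i$. -/

import Mathlib

/-!
The rank of `M₁ ⊕ M₂` at `B` is a minimum over subspaces `X ≤ B`; it is also a minimum over
superspaces `Z ≥ B` of `ρ₁(Z ∩ E₁) + ρ₂(Z ∩ E₂) + dim Z - dim (Z ∩ E₁) - dim (Z ∩ E₂)`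
(`isLeast_splitRank`). Monotonicity gives one inequality; for the other, an optimal `X` yields
`Z = B + π₁X + π₂X`, and the unit-increase property of `ρᵢ` bounds the split rank there.
Substituting `Z = X^⊥`, the minimum defining the rank of `M₁* ⊕ M₂*` at `A` becomes, term by term,
this superspace minimum at `A^⊥` shifted by `dim A - ρ₁(E₁) - ρ₂(E₂)`, since
`(π₁X)^⊥ ∩ E₁ = X^⊥ ∩ E₁` and `dim π₁X + dim (X^⊥ ∩ E₁) = dim E₁`.
-/

open Module Submodule

namespace Function.Involutive

variable {α : Type*} {perp : α → α}

def orderIsoDual [Preorder α] (hinv : Involutive perp) (hanti : Antitone perp) : α ≃o αᵒᵈ where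
  toEquiv := (hinv.toPerm perp).trans OrderDual.toDual
  map_rel_iff' {a b} := ⟨fun h => hinv a ▸ hinv b ▸ hanti h, fun h => hanti h⟩

theorem map_sup_of_antitone [Lattice α] (hinv : Involutive perp) (hanti : Antitone perp)
    (a b : α) : perp (a ⊔ b) = perp a ⊓ perp b :=
  (hinv.orderIsoDual hanti).map_sup a b

theorem map_inf_of_antitone [Lattice α] (hinv : Involutive perp) (hanti : Antitone perp)
    (a b : α) : perp (a ⊓ b) = perp a ⊔ perp b :=
  (hinv.orderIsoDual hanti).map_inf a b

theorem finrank_add_finrank_of_antitone {K V : Type*} [Field K] [AddCommGroup V] [Module K V]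
    [FiniteDimensional K V] {perp : Submodule K V → Submodule K V}
    (hinv : Involutive perp) (hanti : Antitone perp) (W : Submodule K V) :
    finrank K (perp W) + finrank K W = finrank K V := by
  have h : Order.coheight (perp W) = Order.height W :=
    Order.height_orderIso (hinv.orderIsoDual hanti) W
  rw [← Module.length_quotient, ← Module.length_submodule, Module.length_eq_finrank,
    Module.length_eq_finrank, Nat.cast_inj] at h
  rw [← h, add_comm, Submodule.finrank_quotient_add_finrank]

end Function.Involutive

namespace Submodule

variable {K V : Type*} [Field K] [AddCommGroup V] [Module K V]

theorem finrank_sup_of_disjoint [FiniteDimensional K V] {P Q : Submodule K V}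
    (h : Disjoint P Q) : finrank K ↥(P ⊔ Q) = finrank K P + finrank K Q := by
  rw [← finrank_sup_add_finrank_inf_eq, h.eq_bot, finrank_bot, add_zero]

/-- When `E ⊕ F = V`, this is the image of `X` under the projection onto `E` along `F`. -/
abbrev projAlong (E F X : Submodule K V) : Submodule K V := (X ⊔ F) ⊓ E

theorem projAlong_le (E F X : Submodule K V) : projAlong E F X ≤ E := inf_le_right

theorem le_projAlong_sup_projAlong {E F : Submodule K V} (hEF : E ⊔ F = ⊤) (X : Submodule K V) :
    X ≤ projAlong E F X ⊔ projAlong F E X := by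
  intro x hx
  obtain ⟨y, hy, z, hz, rfl⟩ := mem_sup.mp (hEF ▸ mem_top : x ∈ E ⊔ F)
  refine mem_sup.mpr ⟨y, ⟨mem_sup.mpr ⟨y + z, hx, -z, F.neg_mem hz, by abel⟩, hy⟩,
    z, ⟨mem_sup.mpr ⟨y + z, hx, -y, E.neg_mem hy, by abel⟩, hz⟩, rfl⟩

theorem projAlong_le_of_le_sup {E F W Y : Submodule K V} (hEF : Disjoint E F) (hW : W ≤ E)
    (hY : Y ≤ W ⊔ F) : projAlong E F Y ≤ W := by
  calc projAlong E F Y ≤ (W ⊔ F) ⊓ E := inf_le_inf_right E (sup_le hY le_sup_right)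
    _ = W := by rw [sup_inf_assoc_of_le F hW, hEF.symm.eq_bot, sup_bot_eq]

theorem projAlong_eq_self {E F W : Submodule K V} (hEF : Disjoint E F) (hW : W ≤ E) :
    projAlong E F W = W :=
  le_antisymm (projAlong_le_of_le_sup hEF hW le_sup_left) (le_inf le_sup_left hW)

variable {perp : Submodule K V → Submodule K V}

theorem perp_projAlong_inf {E F : Submodule K V} (hEF : Disjoint E F)
    (hinv : Function.Involutive perp) (hanti : Antitone perp) (hE : perp E = F)
    (X : Submodule K V) : perp (projAlong E F X) ⊓ E = perp X ⊓ E := by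
  have hF : perp F = E := hE ▸ hinv E
  rw [projAlong, hinv.map_inf_of_antitone hanti, hinv.map_sup_of_antitone hanti, hE, hF]
  exact projAlong_eq_self hEF inf_le_right

theorem finrank_projAlong_add_finrank_perp_inf [FiniteDimensional K V] {E F : Submodule K V}
    (hEF : E ⊔ F = ⊤) (hinv : Function.Involutive perp) (hanti : Antitone perp)
    (hF : perp F = E) (X : Submodule K V) :
    finrank K (projAlong E F X) + finrank K ↥(perp X ⊓ E) = finrank K E := by
  have hsup := finrank_sup_add_finrank_inf_eq (X ⊔ F) E
  rw [sup_assoc, sup_comm F, hEF, sup_top_eq, finrank_top] at hsup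
  have hperp := hinv.finrank_add_finrank_of_antitone hanti (X ⊔ F)
  rw [hinv.map_sup_of_antitone hanti, hF] at hperp
  rw [projAlong]
  omega

end Submodule

section DirectSum

variable {K V : Type*} [Field K] [AddCommGroup V] [Module K V] [FiniteDimensional K V]

theorem rank_le_rank_add_finrank_sub_finrank {E : Submodule K V} {ρ : Submodule K V → ℤ}
    (hbound : ∀ A ≤ E, 0 ≤ ρ A ∧ ρ A ≤ (finrank K A : ℤ))
    (hsubmod : ∀ A B : Submodule K V, A ≤ E → B ≤ E → ρ (A ⊔ B) + ρ (A ⊓ B) ≤ ρ A + ρ B)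
    {A B : Submodule K V} (hAB : A ≤ B) (hBE : B ≤ E) :
    ρ B ≤ ρ A + finrank K B - finrank K A := by
  obtain ⟨W, hW⟩ := Submodule.exists_isCompl A
  have hsup : A ⊔ W ⊓ B = B := by
    rw [← sup_inf_assoc_of_le W hAB, hW.sup_eq_top, top_inf_eq]
  have hdisj : Disjoint A (W ⊓ B) := hW.disjoint.mono_right inf_le_left
  have hsub := hsubmod A (W ⊓ B) (hAB.trans hBE) (inf_le_right.trans hBE)
  have hdim := finrank_sup_of_disjoint hdisj
  rw [hsup, hdisj.eq_bot] at hsub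
  rw [hsup] at hdim
  have hbot := (hbound ⊥ bot_le).1
  have hWB := (hbound (W ⊓ B) (inf_le_right.trans hBE)).2
  omega

noncomputable def splitRank (E₁ E₂ : Submodule K V) (ρ₁ ρ₂ : Submodule K V → ℤ)
    (Z : Submodule K V) : ℤ :=
  ρ₁ (Z ⊓ E₁) + ρ₂ (Z ⊓ E₂) + finrank K Z - finrank K ↥(Z ⊓ E₁) - finrank K ↥(Z ⊓ E₂)

variable {E₁ E₂ : Submodule K V} {ρ₁ ρ₂ : Submodule K V → ℤ} {B : Submodule K V} {m : ℤ}

theorem le_splitRank (hE : Disjoint E₁ E₂)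
    (hmono₁ : ∀ P Q : Submodule K V, P ≤ E₁ → Q ≤ E₁ → P ≤ Q → ρ₁ P ≤ ρ₁ Q)
    (hmono₂ : ∀ P Q : Submodule K V, P ≤ E₂ → Q ≤ E₂ → P ≤ Q → ρ₂ P ≤ ρ₂ Q)
    (hm : m ∈ lowerBounds {y | ∃ X ≤ B, y = ρ₁ (projAlong E₁ E₂ X) + ρ₂ (projAlong E₂ E₁ X)
      + (finrank K B : ℤ) - (finrank K X : ℤ)})
    {Z : Submodule K V} (hBZ : B ≤ Z) : m ≤ splitRank E₁ E₂ ρ₁ ρ₂ Z := by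
  set S := Z ⊓ E₁ ⊔ Z ⊓ E₂
  have hπ₁ : projAlong E₁ E₂ (S ⊓ B) ≤ Z ⊓ E₁ :=
    projAlong_le_of_le_sup hE inf_le_right (inf_le_left.trans (sup_le_sup_left inf_le_right _))
  have hπ₂ : projAlong E₂ E₁ (S ⊓ B) ≤ Z ⊓ E₂ :=
    projAlong_le_of_le_sup hE.symm inf_le_right
      (inf_le_left.trans (sup_comm (Z ⊓ E₂) E₁ ▸ sup_le_sup_right inf_le_right _))
  have hS : finrank K S = _ := finrank_sup_of_disjoint (hE.mono inf_le_right inf_le_right)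
  have hSB := finrank_sup_add_finrank_inf_eq S B
  have hSBZ := finrank_mono (sup_le (sup_le inf_le_left inf_le_left) hBZ : S ⊔ B ≤ Z)
  have hmS := hm ⟨S ⊓ B, inf_le_right, rfl⟩
  have h₁ := hmono₁ _ _ (projAlong_le _ _ _) inf_le_right hπ₁
  have h₂ := hmono₂ _ _ (projAlong_le _ _ _) inf_le_right hπ₂
  unfold splitRank
  omega

theorem exists_splitRank_le (hE : IsCompl E₁ E₂)
    (hunit₁ : ∀ P Q : Submodule K V, P ≤ Q → Q ≤ E₁ → ρ₁ Q ≤ ρ₁ P + finrank K Q - finrank K P)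
    (hunit₂ : ∀ P Q : Submodule K V, P ≤ Q → Q ≤ E₂ → ρ₂ Q ≤ ρ₂ P + finrank K Q - finrank K P)
    (hm : m ∈ {y | ∃ X ≤ B, y = ρ₁ (projAlong E₁ E₂ X) + ρ₂ (projAlong E₂ E₁ X)
      + (finrank K B : ℤ) - (finrank K X : ℤ)}) :
    ∃ Z, B ≤ Z ∧ splitRank E₁ E₂ ρ₁ ρ₂ Z ≤ m := by
  obtain ⟨Y, hYB, rfl⟩ := hm
  set Q₁ := projAlong E₁ E₂ Y
  set Q₂ := projAlong E₂ E₁ Y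
  refine ⟨B ⊔ (Q₁ ⊔ Q₂), le_sup_left, ?_⟩
  have h₁ := hunit₁ Q₁ ((B ⊔ (Q₁ ⊔ Q₂)) ⊓ E₁)
    (le_inf (le_sup_left.trans le_sup_right) (projAlong_le _ _ _)) inf_le_right
  have h₂ := hunit₂ Q₂ ((B ⊔ (Q₁ ⊔ Q₂)) ⊓ E₂)
    (le_inf (le_sup_right.trans le_sup_right) (projAlong_le _ _ _)) inf_le_right
  have hQ : finrank K ↥(Q₁ ⊔ Q₂) = _ :=
    finrank_sup_of_disjoint (hE.disjoint.mono (projAlong_le E₁ E₂ Y) (projAlong_le E₂ E₁ Y))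
  have hBQ := finrank_sup_add_finrank_inf_eq B (Q₁ ⊔ Q₂)
  have hY := finrank_mono
    (le_inf hYB (le_projAlong_sup_projAlong hE.codisjoint.eq_top Y) : Y ≤ B ⊓ (Q₁ ⊔ Q₂))
  unfold splitRank
  omega

theorem isLeast_splitRank (hE : IsCompl E₁ E₂)
    (hmono₁ : ∀ P Q : Submodule K V, P ≤ E₁ → Q ≤ E₁ → P ≤ Q → ρ₁ P ≤ ρ₁ Q)
    (hmono₂ : ∀ P Q : Submodule K V, P ≤ E₂ → Q ≤ E₂ → P ≤ Q → ρ₂ P ≤ ρ₂ Q)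
    (hunit₁ : ∀ P Q : Submodule K V, P ≤ Q → Q ≤ E₁ → ρ₁ Q ≤ ρ₁ P + finrank K Q - finrank K P)
    (hunit₂ : ∀ P Q : Submodule K V, P ≤ Q → Q ≤ E₂ → ρ₂ Q ≤ ρ₂ P + finrank K Q - finrank K P)
    (hm : IsLeast {y | ∃ X ≤ B, y = ρ₁ (projAlong E₁ E₂ X) + ρ₂ (projAlong E₂ E₁ X)
      + (finrank K B : ℤ) - (finrank K X : ℤ)} m) :
    IsLeast (splitRank E₁ E₂ ρ₁ ρ₂ '' Set.Ici B) m := by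
  have hle := fun {Z} (hBZ : B ≤ Z) => le_splitRank hE.disjoint hmono₁ hmono₂ hm.2 hBZ
  obtain ⟨Z, hBZ, hZ⟩ := exists_splitRank_le hE hunit₁ hunit₂ hm.1
  refine ⟨⟨Z, hBZ, le_antisymm hZ (hle hBZ)⟩, ?_⟩
  rintro _ ⟨Z', hBZ', rfl⟩
  exact hle hBZ'

theorem splitRank_top (hE : IsCompl E₁ E₂) : splitRank E₁ E₂ ρ₁ ρ₂ ⊤ = ρ₁ E₁ + ρ₂ E₂ := by
  have := finrank_add_eq_of_isCompl hE
  rw [splitRank, top_inf_eq, top_inf_eq, finrank_top]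
  omega

noncomputable abbrev dualRank (perp : Submodule K V → Submodule K V) (E : Submodule K V)
    (ρ : Submodule K V → ℤ) (W : Submodule K V) : ℤ :=
  finrank K W - ρ E + ρ (perp W ⊓ E)

theorem dualRank_add_dualRank_sub_finrank_eq_splitRank_perp (hE : IsCompl E₁ E₂)
    {perp : Submodule K V → Submodule K V} (hinv : Function.Involutive perp)
    (hanti : Antitone perp) (hperp : perp E₁ = E₂) (X : Submodule K V) :
    dualRank perp E₁ ρ₁ (projAlong E₁ E₂ X) + dualRank perp E₂ ρ₂ (projAlong E₂ E₁ X)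
      - finrank K X = splitRank E₁ E₂ ρ₁ ρ₂ (perp X) - (ρ₁ E₁ + ρ₂ E₂) := by
  have hperp' : perp E₂ = E₁ := hperp ▸ hinv E₁
  rw [dualRank, dualRank, perp_projAlong_inf hE.disjoint hinv hanti hperp,
    perp_projAlong_inf hE.disjoint.symm hinv hanti hperp', splitRank]
  have := finrank_projAlong_add_finrank_perp_inf hE.codisjoint.eq_top hinv hanti hperp' X
  have := finrank_projAlong_add_finrank_perp_inf hE.symm.codisjoint.eq_top hinv hanti hperp X
  have := finrank_add_eq_of_isCompl hE
  have := hinv.finrank_add_finrank_of_antitone hanti X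
  omega

end DirectSum

theorem dual_of_direct_sum
    {K V : Type*} [Field K] [AddCommGroup V] [Module K V] [FiniteDimensional K V]
    (E1 E2 : Submodule K V) (hdisj : E1 ⊓ E2 = ⊥) (hsup : E1 ⊔ E2 = ⊤)
    -- the involutive anti-isomorphism ⊥ of the subspace lattice of E = E1 ⊕ E2
    (perp : Submodule K V → Submodule K V)
    (hperp_inv : ∀ A : Submodule K V, perp (perp A) = A)
    (hperp_anti : ∀ A B : Submodule K V, A ≤ B → perp B ≤ perp A)
    (hperpE1 : perp E1 = E2)
    -- the q-matroids M1 on E1 and M2 on E2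
    (r1 r2 : Submodule K V → ℤ)
    (hR1₁ : ∀ A ≤ E1, 0 ≤ r1 A ∧ r1 A ≤ (finrank K A : ℤ))
    (hR2₁ : ∀ A B : Submodule K V, A ≤ E1 → B ≤ E1 → A ≤ B → r1 A ≤ r1 B)
    (hR3₁ : ∀ A B : Submodule K V, A ≤ E1 → B ≤ E1 →
      r1 (A ⊔ B) + r1 (A ⊓ B) ≤ r1 A + r1 B)
    (hR1₂ : ∀ A ≤ E2, 0 ≤ r2 A ∧ r2 A ≤ (finrank K A : ℤ))
    (hR2₂ : ∀ A B : Submodule K V, A ≤ E2 → B ≤ E2 → A ≤ B → r2 A ≤ r2 B)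
    (hR3₂ : ∀ A B : Submodule K V, A ≤ E2 → B ≤ E2 →
      r2 (A ⊔ B) + r2 (A ⊓ B) ≤ r2 A + r2 B)
    -- r = rank function of M1 ⊕ M2, the union of the loop-extensions of M1 and M2
    (r : Submodule K V → ℤ)
    (hr : ∀ A : Submodule K V, IsLeast
      {y : ℤ | ∃ X ≤ A,
        y = r1 ((X ⊔ E2) ⊓ E1) + r2 ((X ⊔ E1) ⊓ E2)
          + (finrank K A : ℤ) - (finrank K X : ℤ)} (r A))
    -- rd = rank function of M1* ⊕ M2*, where duality on Eᵢ is A ↦ perp A ⊓ Eᵢ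
    (rd : Submodule K V → ℤ)
    (hrd : ∀ A : Submodule K V, IsLeast
      {y : ℤ | ∃ X ≤ A,
        y = ((finrank K ↥((X ⊔ E2) ⊓ E1) : ℤ) - r1 E1
              + r1 (perp ((X ⊔ E2) ⊓ E1) ⊓ E1))
          + ((finrank K ↥((X ⊔ E1) ⊓ E2) : ℤ) - r2 E2
              + r2 (perp ((X ⊔ E1) ⊓ E2) ⊓ E2))
          + (finrank K A : ℤ) - (finrank K X : ℤ)} (rd A)) :
    -- (M1 ⊕ M2)* = M1* ⊕ M2*
    ∀ A : Submodule K V, (finrank K A : ℤ) - r ⊤ + r (perp A) = rd A := by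
  intro A
  have hE : IsCompl E1 E2 := ⟨disjoint_iff.mpr hdisj, codisjoint_iff.mpr hsup⟩
  have hanti : Antitone perp := fun A B => hperp_anti A B
  have hsplit : ∀ B, IsLeast (splitRank E1 E2 r1 r2 '' Set.Ici B) (r B) := fun B =>
    isLeast_splitRank hE hR2₁ hR2₂
      (fun _ _ => rank_le_rank_add_finrank_sub_finrank hR1₁ hR3₁)
      (fun _ _ => rank_le_rank_add_finrank_sub_finrank hR1₂ hR3₂) (hr B)
  have hrtop : r ⊤ = r1 E1 + r2 E2 := by
    obtain ⟨Z, hZ : ⊤ ≤ Z, hrZ⟩ := (hsplit ⊤).1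
    rw [← hrZ, top_le_iff.mp hZ, splitRank_top hE]
  have hdual := dualRank_add_dualRank_sub_finrank_eq_splitRank_perp (ρ₁ := r1) (ρ₂ := r2) hE
    hperp_inv hanti hperpE1
  refine ((hrd A).unique ⟨?_, ?_⟩).symm
  · obtain ⟨Z, hZ, hrZ⟩ := (hsplit (perp A)).1
    refine ⟨perp Z, hperp_inv A ▸ hanti hZ, ?_⟩
    have := hdual (perp Z)
    rw [hperp_inv Z] at this
    linarith
  · rintro _ ⟨X, hXA, rfl⟩
    have := hdual X
    have := (hsplit (perp A)).2 ⟨perp X, hanti hXA, rfl⟩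
    linarith
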